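/- arXiv:2212.05928 — 4 statements merged into one kernel-verified Lean document; each statement's English description precedes it below -/
import Mathlib

section
/- Under the hypotheses of the previous statement, if additionally V : G → ℝ satisfies inf_G V =: c₀ > 0 and p ≥ 2, then for all x ∈ G, (1/2) ∑_{y∈G} ω(x,y)(1 - e^{ξ(y)-ξ(x)})² - p V(x) μ(x) ≤ ((α²/2) e^{2sα} - c₀ p) μ(x). -/
/-!
The cut-off `ξ = -α [d(·, x₀) - δR]₊` is `α`-Lipschitz for `d`, so across an edge of positive
weight `|ξ(y) - ξ(x)| ≤ α d(x, y) ≤ α s`. The bound `|1 - eᵗ| ≤ |t| e^{|t|}` then gives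
`(1 - e^{ξ(y)-ξ(x)})² ≤ α² e^{2sα} d(x, y)²`, and summing against `ω(x, ·)` the intrinsic bound
turns `∑ ω(x, y) d(x, y)²` into `μ(x)`. The potential term is handled by `V ≥ c₀` and `p ≥ 0`.
-/

open Real

lemma Real.abs_one_sub_exp_le (t : ℝ) : |1 - exp t| ≤ |t| * exp |t| := by
  rcases le_total 0 t with ht | ht
  · have h : exp t * (1 - t) ≤ 1 := by
      simpa [← exp_add] using mul_le_mul_of_nonneg_left (one_sub_le_exp_neg t) (exp_pos t).le
    rw [abs_of_nonpos (sub_nonpos.2 (one_le_exp ht)), abs_of_nonneg ht]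
    linarith
  · rw [abs_of_nonneg (sub_nonneg.2 (exp_le_one_iff.2 ht)), abs_of_nonpos ht]
    nlinarith [add_one_le_exp t, one_le_exp (neg_nonneg.2 ht)]

lemma Real.sq_one_sub_exp_le_of_abs_le {t L : ℝ} (h : |t| ≤ L) :
    (1 - exp t) ^ 2 ≤ L ^ 2 * exp (2 * L) := by
  have hL : 0 ≤ L := (abs_nonneg t).trans h
  calc (1 - exp t) ^ 2 ≤ (L * exp L) ^ 2 := by
        refine sq_le_sq.2 ((abs_one_sub_exp_le t).trans ?_)
        rw [abs_of_nonneg (mul_nonneg hL (exp_pos L).le)]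
        gcongr
    _ = L ^ 2 * exp (2 * L) := by rw [mul_pow, ← exp_nat_mul]; norm_num

lemma abs_sub_le_of_triangle {G : Type*} {d : G → G → ℝ} (hd_symm : ∀ x y, d x y = d y x)
    (hd_tri : ∀ x y z, d x y ≤ d x z + d z y) (x y x₀ : G) :
    |d y x₀ - d x x₀| ≤ d x y := by
  rw [abs_le]
  constructor
  · linarith [hd_tri x x₀ y]
  · linarith [hd_tri y x₀ x, hd_symm y x]

lemma sq_one_sub_exp_cutoff_le {G : Type*} {d : G → G → ℝ} (hd_symm : ∀ x y, d x y = d y x)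
    (hd_tri : ∀ x y z, d x y ≤ d x z + d z y) {α s : ℝ} (hα : 0 ≤ α) (r : ℝ) {x y : G}
    (x₀ : G) (hxy : d x y ≤ s) :
    (1 - exp ((-α * max (d y x₀ - r) 0) - (-α * max (d x x₀ - r) 0))) ^ 2
      ≤ α ^ 2 * exp (2 * s * α) * d x y ^ 2 := by
  have hlip : |(-α * max (d y x₀ - r) 0) - (-α * max (d x x₀ - r) 0)| ≤ α * d x y := by
    rw [← mul_sub, abs_mul, abs_neg, abs_of_nonneg hα]
    gcongr
    exact (abs_max_sub_max_le_abs _ _ _).trans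
      (by simpa using abs_sub_le_of_triangle hd_symm hd_tri x y x₀)
  have hd : 0 ≤ α * d x y := (abs_nonneg _).trans hlip
  calc _ ≤ (α * d x y) ^ 2 * exp (2 * (α * d x y)) := sq_one_sub_exp_le_of_abs_le hlip
    _ ≤ (α * d x y) ^ 2 * exp (2 * s * α) := by
        gcongr (α * d x y) ^ 2 * ?_
        exact exp_le_exp.2 (by nlinarith)
    _ = α ^ 2 * exp (2 * s * α) * d x y ^ 2 := by ring

lemma tsum_le_mul_of_le_mul {ι : Type*} {a b : ι → ℝ} {K M : ℝ} (hK : 0 ≤ K)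
    (ha : ∀ i, 0 ≤ a i) (hab : ∀ i, a i ≤ K * b i) (hb : Summable b) (hbM : ∑' i, b i ≤ M) :
    ∑' i, a i ≤ K * M :=
  calc ∑' i, a i ≤ ∑' i, K * b i :=
        (hb.mul_left K).of_nonneg_of_le ha hab |>.tsum_le_tsum hab (hb.mul_left K)
    _ = K * ∑' i, b i := tsum_mul_left
    _ ≤ K * M := by gcongr

theorem stmt9_general {G : Type*}
    (ω : G → G → ℝ) (μ : G → ℝ) (d : G → G → ℝ)
    (hω_nonneg : ∀ x y, 0 ≤ ω x y)
    (hμ : ∀ x, 0 < μ x)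
    (hd_symm : ∀ x y, d x y = d y x)
    (hd_tri : ∀ x y z, d x y ≤ d x z + d z y)
    (s : ℝ) (hjump : ∀ x y, 0 < ω x y → d x y ≤ s)
    (hwsum : ∀ x, Summable fun y => ω x y * (d x y)^2)
    (hintr : ∀ x, ∑' y, ω x y * (d x y)^2 ≤ μ x)
    (x₀ : G) (α R δ : ℝ) (hα : 0 < α)
    (V : G → ℝ) (c₀ : ℝ) (hV : ∀ x, c₀ ≤ V x)
    (p : ℝ) (hp : 2 ≤ p) :
    ∀ x : G,
      (1/2) * (∑' y, ω x y *
          (1 - Real.exp ((-α * max (d y x₀ - δ * R) 0) - (-α * max (d x x₀ - δ * R) 0)))^2)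
        - p * V x * μ x
        ≤ ((α^2 / 2) * Real.exp (2 * s * α) - c₀ * p) * μ x := by
  intro x
  have hterm : ∀ y, ω x y *
      (1 - exp ((-α * max (d y x₀ - δ * R) 0) - (-α * max (d x x₀ - δ * R) 0))) ^ 2
      ≤ α ^ 2 * exp (2 * s * α) * (ω x y * d x y ^ 2) := by
    intro y
    rcases (hω_nonneg x y).eq_or_lt with h | h
    · simp [← h]
    · rw [mul_left_comm]
      exact mul_le_mul_of_nonneg_left
        (sq_one_sub_exp_cutoff_le hd_symm hd_tri hα.le _ x₀ (hjump x y h)) h.le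
  have hsum := tsum_le_mul_of_le_mul (by positivity)
    (fun y => mul_nonneg (hω_nonneg x y) (sq_nonneg _)) hterm (hwsum x) (hintr x)
  have hpot : c₀ * p * μ x ≤ p * V x * μ x :=
    mul_le_mul_of_nonneg_right (by nlinarith [hV x]) (hμ x).le
  linarith

theorem stmt9 {G : Type*} [Countable G]
    (ω : G → G → ℝ) (μ : G → ℝ) (d : G → G → ℝ)
    (hω_nonneg : ∀ x y, 0 ≤ ω x y)
    (hω_symm : ∀ x y, ω x y = ω y x)
    (hω_diag : ∀ x, ω x x = 0)
    (hμ : ∀ x, 0 < μ x)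
    (hd_self : ∀ x, d x x = 0)
    (hd_symm : ∀ x y, d x y = d y x)
    (hd_tri : ∀ x y z, d x y ≤ d x z + d z y)
    (s : ℝ) (hs : 0 ≤ s) (hjump : ∀ x y, 0 < ω x y → d x y ≤ s)
    (hwsum : ∀ x, Summable fun y => ω x y * (d x y)^2)
    (hintr : ∀ x, ∑' y, ω x y * (d x y)^2 ≤ μ x)
    (x₀ : G) (α R δ : ℝ) (hα : 0 < α) (hR : 0 < R) (hδ : 0 < δ) (hδ1 : δ < 1)
    (V : G → ℝ) (c₀ : ℝ) (hc₀ : 0 < c₀) (hV : ∀ x, c₀ ≤ V x)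
    (p : ℝ) (hp : 2 ≤ p) :
    ∀ x : G,
      (1/2) * (∑' y, ω x y *
          (1 - Real.exp ((-α * max (d y x₀ - δ * R) 0) - (-α * max (d x x₀ - δ * R) 0)))^2)
        - p * V x * μ x
        ≤ ((α^2 / 2) * Real.exp (2 * s * α) - c₀ * p) * μ x :=
  stmt9_general ω μ d hω_nonneg hμ hd_symm hd_tri s hjump hwsum hintr x₀ α R δ hα V c₀ hV p hp
end

section
/- Let d be a pseudo metric on a weighted graph (G, ω, μ) with finite jump size s which is 1-intrinsic with bound C₀, i.e. (1/μ(x)) ∑_y ω(x,y) d(x,y) ≤ C₀ for all x. Fix x₀ ∈ G, α > 0, let c₀ := inf_G V > 0 and p ≥ 1, and set ζ(x) := e^{-α d(x,x₀)}. Then Δζ(x) - p V(x) ζ(x) ≤ (C₀ α e^{αs} - p c₀) ζ(x) for all x ∈ G. -/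
/-
Passing from x to a neighbour y changes d(·, x₀) by at most d(x, y) ≤ s, so
ζ(y) - ζ(x) ≤ ζ(x) (e^{α d(x,y)} - 1) ≤ α e^{α s} ζ(x) d(x, y) by e^t - 1 ≤ t e^t.
Summing against ω(x, ·) and using that d is 1-intrinsic gives Δζ(x) ≤ C₀ α e^{α s} ζ(x),
while the potential term contributes -p V(x) ζ(x) ≤ -p c₀ ζ(x).
-/

open Real

lemma Real.exp_sub_one_le_mul_exp (t : ℝ) : exp t - 1 ≤ t * exp t := by
  have h : (1 - t) * exp t ≤ exp (-t) * exp t :=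
    mul_le_mul_of_nonneg_right (one_sub_le_exp_neg t) (exp_pos t).le
  rw [← exp_add, neg_add_cancel, exp_zero] at h
  linarith

lemma exp_neg_mul_sub_exp_neg_mul_le {α a b t s : ℝ} (hα : 0 ≤ α) (ht : 0 ≤ t) (hts : t ≤ s)
    (hab : a ≤ t + b) :
    exp (-α * b) - exp (-α * a) ≤ α * exp (α * s) * exp (-α * a) * t := by
  have h_shift : exp (-α * b) ≤ exp (-α * a) * exp (α * t) := by
    rw [← exp_add]
    exact exp_le_exp.2 (by nlinarith)
  have h_growth : exp (α * t) - 1 ≤ α * t * exp (α * s) :=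
    (exp_sub_one_le_mul_exp _).trans <|
      mul_le_mul_of_nonneg_left (exp_le_exp.2 (by nlinarith)) (mul_nonneg hα ht)
  calc exp (-α * b) - exp (-α * a)
      ≤ exp (-α * a) * (exp (α * t) - 1) := by linarith
    _ ≤ exp (-α * a) * (α * t * exp (α * s)) :=
        mul_le_mul_of_nonneg_left h_growth (exp_pos _).le
    _ = α * exp (α * s) * exp (-α * a) * t := by ring

lemma exp_neg_mul_le_one {α a : ℝ} (hα : 0 ≤ α) (ha : 0 ≤ a) : exp (-α * a) ≤ 1 :=
  exp_le_one_iff.2 (by nlinarith)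

lemma nonneg_of_self_symm_triangle {G : Type*} {d : G → G → ℝ} (hd_self : ∀ x, d x x = 0)
    (hd_symm : ∀ x y, d x y = d y x) (hd_tri : ∀ x y z, d x y ≤ d x z + d z y) (x y : G) :
    0 ≤ d x y := by
  have := hd_tri x x y
  rw [hd_self, hd_symm y x] at this
  linarith

section ExpWeight

variable {G : Type*} {ω d : G → G → ℝ} {s α : ℝ} (x₀ x : G)
  (hω_nonneg : ∀ y, 0 ≤ ω x y) (hd_nonneg : ∀ x y, 0 ≤ d x y)
  (hd_tri : ∀ x y z, d x y ≤ d x z + d z y) (hjump : ∀ y, 0 < ω x y → d x y ≤ s) (hα : 0 ≤ α)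

include hω_nonneg hd_nonneg hd_tri hjump hα in
lemma exp_neg_dist_sub_mul_le (y : G) :
    (exp (-α * d y x₀) - exp (-α * d x x₀)) * ω x y
      ≤ α * exp (α * s) * exp (-α * d x x₀) * (ω x y * d x y) := by
  rcases (hω_nonneg y).eq_or_lt with hzero | hpos
  · simp [← hzero]
  · have h := exp_neg_mul_sub_exp_neg_mul_le hα (hd_nonneg x y) (hjump y hpos)
      (hd_tri x x₀ y)
    calc (exp (-α * d y x₀) - exp (-α * d x x₀)) * ω x y
        ≤ α * exp (α * s) * exp (-α * d x x₀) * d x y * ω x y :=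
          mul_le_mul_of_nonneg_right h hpos.le
      _ = α * exp (α * s) * exp (-α * d x x₀) * (ω x y * d x y) := by ring

include hω_nonneg hd_nonneg hd_tri hjump hα in
lemma tsum_exp_neg_dist_sub_mul_le (hω_sum : Summable fun y => ω x y)
    (hdsum : Summable fun y => ω x y * d x y) :
    ∑' y, (exp (-α * d y x₀) - exp (-α * d x x₀)) * ω x y
      ≤ α * exp (α * s) * exp (-α * d x x₀) * ∑' y, ω x y * d x y := by
  have h_summable : Summable fun y => (exp (-α * d y x₀) - exp (-α * d x x₀)) * ω x y := by
    refine hω_sum.of_norm_bounded fun y => ?_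
    have h_diff : |exp (-α * d y x₀) - exp (-α * d x x₀)| ≤ 1 :=
      abs_sub_le_of_nonneg_of_le (exp_pos _).le (exp_neg_mul_le_one hα (hd_nonneg y x₀))
        (exp_pos _).le (exp_neg_mul_le_one hα (hd_nonneg x x₀))
    rw [Real.norm_eq_abs, abs_mul, abs_of_nonneg (hω_nonneg y)]
    exact mul_le_of_le_one_left (hω_nonneg y) h_diff
  rw [← tsum_mul_left]
  exact h_summable.tsum_le_tsum
    (exp_neg_dist_sub_mul_le x₀ x hω_nonneg hd_nonneg hd_tri hjump hα) (hdsum.mul_left _)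

end ExpWeight

theorem stmt10_general {G : Type*}
    (ω : G → G → ℝ) (μ : G → ℝ) (d : G → G → ℝ)
    (hω_nonneg : ∀ x y, 0 ≤ ω x y)
    (hω_sum : ∀ x, Summable fun y => ω x y)
    (hμ : ∀ x, 0 < μ x)
    (hd_self : ∀ x, d x x = 0)
    (hd_symm : ∀ x y, d x y = d y x)
    (hd_tri : ∀ x y z, d x y ≤ d x z + d z y)
    (s : ℝ) (hjump : ∀ x y, 0 < ω x y → d x y ≤ s)
    (C₀ : ℝ)
    (hdsum : ∀ x, Summable fun y => ω x y * d x y)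
    (hintr1 : ∀ x, ∑' y, ω x y * d x y ≤ C₀ * μ x)
    (x₀ : G) (α : ℝ) (hα : 0 < α)
    (V : G → ℝ) (c₀ : ℝ) (hV : ∀ x, c₀ ≤ V x)
    (p : ℝ) (hp : 1 ≤ p) :
    ∀ x : G,
      (μ x)⁻¹ * (∑' y, (Real.exp (-α * d y x₀) - Real.exp (-α * d x x₀)) * ω x y)
          - p * V x * Real.exp (-α * d x x₀)
        ≤ (C₀ * α * Real.exp (α * s) - p * c₀) * Real.exp (-α * d x x₀) := by
  intro x
  set ζx := exp (-α * d x x₀)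
  have h_sum := tsum_exp_neg_dist_sub_mul_le x₀ x (hω_nonneg x)
    (nonneg_of_self_symm_triangle hd_self hd_symm hd_tri) hd_tri (hjump x) hα.le
    (hω_sum x) (hdsum x)
  have h_laplacian : (μ x)⁻¹ * ∑' y, (exp (-α * d y x₀) - ζx) * ω x y
      ≤ C₀ * α * exp (α * s) * ζx := by
    rw [inv_mul_le_iff₀ (hμ x)]
    calc _ ≤ α * exp (α * s) * ζx * (C₀ * μ x) :=
          h_sum.trans (mul_le_mul_of_nonneg_left (hintr1 x) (by positivity))
      _ = μ x * (C₀ * α * exp (α * s) * ζx) := by ring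
  have h_potential : p * c₀ * ζx ≤ p * V x * ζx :=
    mul_le_mul_of_nonneg_right (mul_le_mul_of_nonneg_left (hV x) (by linarith))
      (exp_pos _).le
  linarith

theorem stmt10 {G : Type*} [Countable G]
    (ω : G → G → ℝ) (μ : G → ℝ) (d : G → G → ℝ)
    (hω_nonneg : ∀ x y, 0 ≤ ω x y)
    (hω_symm : ∀ x y, ω x y = ω y x)
    (hω_diag : ∀ x, ω x x = 0)
    (hω_sum : ∀ x, Summable fun y => ω x y)
    (hμ : ∀ x, 0 < μ x)
    (hd_self : ∀ x, d x x = 0)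
    (hd_symm : ∀ x y, d x y = d y x)
    (hd_tri : ∀ x y z, d x y ≤ d x z + d z y)
    (s : ℝ) (hs : 0 ≤ s) (hjump : ∀ x y, 0 < ω x y → d x y ≤ s)
    (C₀ : ℝ)
    (hdsum : ∀ x, Summable fun y => ω x y * d x y)
    (hintr1 : ∀ x, ∑' y, ω x y * d x y ≤ C₀ * μ x)
    (x₀ : G) (α : ℝ) (hα : 0 < α)
    (V : G → ℝ) (c₀ : ℝ) (hc₀ : 0 < c₀) (hV : ∀ x, c₀ ≤ V x)
    (p : ℝ) (hp : 1 ≤ p) :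
    ∀ x : G,
      (μ x)⁻¹ * (∑' y, (Real.exp (-α * d y x₀) - Real.exp (-α * d x x₀)) * ω x y)
          - p * V x * Real.exp (-α * d x x₀)
        ≤ (C₀ * α * Real.exp (α * s) - p * c₀) * Real.exp (-α * d x x₀) :=
  stmt10_general ω μ d hω_nonneg hω_sum hμ hd_self hd_symm hd_tri s hjump C₀ hdsum hintr1 x₀ α hα V
    c₀ hV p hp
end

section
/- Let (G, ω, μ) be an infinite, connected, locally finite weighted graph, V : G → ℝ, u a solution of Δu - Vu = 0 on G, p ≥ 1, and v : G → ℝ a nonnegative finitely supported function. Then ∑_{x∈G} |u(x)|^p ( -Δv(x) + p V(x) v(x) ) μ(x) ≤ 0. -/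
/-!
Write `f = |u|^p`. The convex function `s ↦ |s|^p` has subgradient `p |s|^p / s` at `s` (read as
`0` at `s = 0`), so pointwise `Δf ≥ (p |u|^p / u) Δu = p V f`; this subgradient inequality takes the
place of the smoothing `(u² + α)^{p/2}` and the limit `α → 0`. Multiplying by `v μ ≥ 0` and
summing, the discrete Green formula `∑ f Δv μ = ∑ v Δf μ`, a finite sum because `v` has finite
support and the graph is locally finite, turns this into the claim.
-/

open Finset Function

namespace Real

theorem rpow_add_mul_rpow_sub_one_mul_sub_le {p a b : ℝ} (hp : 1 ≤ p) (ha : 0 < a) (hb : 0 ≤ b) :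
    a ^ p + p * a ^ (p - 1) * (b - a) ≤ b ^ p := by
  have hbernoulli := one_add_mul_self_le_rpow_one_add
    (s := b / a - 1) (by linarith [div_nonneg hb ha.le]) hp
  rw [add_sub_cancel, div_rpow hb ha.le] at hbernoulli
  have hap : 0 < a ^ p := rpow_pos_of_pos ha p
  calc a ^ p + p * a ^ (p - 1) * (b - a) = a ^ p * (1 + p * (b / a - 1)) := by
        rw [rpow_sub_one ha.ne']; field_simp
    _ ≤ a ^ p * (b ^ p / a ^ p) := by gcongr
    _ = b ^ p := by field_simp

theorem abs_rpow_add_mul_div_mul_sub_le {p : ℝ} (hp : 1 ≤ p) (s t : ℝ) :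
    |s| ^ p + p * |s| ^ p / s * (t - s) ≤ |t| ^ p := by
  rcases eq_or_ne s 0 with rfl | hs
  · simp [zero_rpow (by linarith : p ≠ 0)]
    positivity
  have ha : 0 < |s| := abs_pos.2 hs
  have hsign : |s| * t / s ≤ |t| :=
    calc |s| * t / s ≤ |(|s| * t / s)| := le_abs_self _
      _ = |t| := by rw [abs_div, abs_mul, abs_abs]; field_simp
  have hp0 : 0 ≤ p * |s| ^ (p - 1) := by positivity
  calc |s| ^ p + p * |s| ^ p / s * (t - s)
        = |s| ^ p + p * |s| ^ (p - 1) * (|s| * t / s - |s|) := by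
          rw [rpow_sub_one ha.ne']; field_simp
    _ ≤ |s| ^ p + p * |s| ^ (p - 1) * (|t| - |s|) := by gcongr
    _ ≤ |t| ^ p := rpow_add_mul_rpow_sub_one_mul_sub_le hp ha (abs_nonneg t)

end Real

section WeightedGraph

variable {G : Type*}

noncomputable def graphLaplacian (ω : G → G → ℝ) (μ f : G → ℝ) (x : G) : ℝ :=
  (μ x)⁻¹ * ∑' y, (f y - f x) * ω x y

variable {ω : G → G → ℝ}

theorem summable_sub_mul_of_finite (f : G → ℝ) {x : G} (hx : {y | ω x y ≠ 0}.Finite) :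
    Summable fun y => (f y - f x) * ω x y :=
  summable_of_hasFiniteSupport <| hx.subset fun _ hy => right_ne_zero_of_mul hy

theorem mul_mul_abs_rpow_le_graphLaplacian {μ V u : G → ℝ} {x : G} (hω : ∀ y, 0 ≤ ω x y)
    (hx : {y | ω x y ≠ 0}.Finite) (hμ : 0 < μ x) (hu : graphLaplacian ω μ u x = V x * u x)
    {p : ℝ} (hp : 1 ≤ p) :
    p * V x * |u x| ^ p ≤ graphLaplacian ω μ (fun y => |u y| ^ p) x := by
  set c := p * |u x| ^ p / u x
  have hcu : c * u x = p * |u x| ^ p := by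
    rcases eq_or_ne (u x) 0 with h | h
    · simp [c, h, Real.zero_rpow (by linarith : p ≠ 0)]
    · exact div_mul_cancel₀ _ h
  have hsum : ∑' y, (u y - u x) * ω x y = μ x * (V x * u x) := by
    rw [← hu, graphLaplacian, mul_inv_cancel_left₀ hμ.ne']
  have hsubgradient : c * ∑' y, (u y - u x) * ω x y ≤ ∑' y, (|u y| ^ p - |u x| ^ p) * ω x y := by
    rw [← tsum_mul_left]
    refine Summable.tsum_le_tsum (fun y => ?_) ((summable_sub_mul_of_finite u hx).mul_left c)
      (summable_sub_mul_of_finite _ hx)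
    rw [← mul_assoc]
    exact mul_le_mul_of_nonneg_right
      (by linarith [Real.abs_rpow_add_mul_div_mul_sub_le hp (u x) (u y)]) (hω y)
  rw [graphLaplacian, le_inv_mul_iff₀ hμ]
  calc μ x * (p * V x * |u x| ^ p) = c * (μ x * (V x * u x)) := by
        linear_combination (-(μ x * V x)) * hcu
    _ ≤ _ := hsum ▸ hsubgradient

theorem exists_finset_forall_notMem_mul_eq_zero (hloc : ∀ x, {y | ω x y ≠ 0}.Finite)
    {v : G → ℝ} (hv : (support v).Finite) :
    ∃ T : Finset G, (∀ x ∉ T, v x = 0) ∧ ∀ x, ∀ y ∉ T, v x * ω x y = 0 := by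
  classical
  refine ⟨hv.toFinset ∪ hv.toFinset.biUnion fun x => (hloc x).toFinset, fun x hx => ?_,
    fun x y hy => ?_⟩
  · by_contra h
    exact hx (mem_union_left _ (hv.mem_toFinset.2 h))
  · by_contra h
    obtain ⟨hvx, hωxy⟩ := mul_ne_zero_iff.1 h
    exact hy (mem_union_right _ (mem_biUnion.2
      ⟨x, hv.mem_toFinset.2 hvx, (hloc x).mem_toFinset.2 hωxy⟩))

theorem sum_mul_tsum_sub_mul_comm (hsymm : ∀ x y, ω x y = ω y x) (f : G → ℝ) {v : G → ℝ}
    {T : Finset G} (hv : ∀ x ∉ T, v x = 0) (hvω : ∀ x, ∀ y ∉ T, v x * ω x y = 0) :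
    ∑ x ∈ T, f x * ∑' y, (v y - v x) * ω x y = ∑ x ∈ T, v x * ∑' y, (f y - f x) * ω x y := by
  have hswap : ∑ x ∈ T, ∑ y ∈ T, f x * v y * ω x y = ∑ x ∈ T, ∑ y ∈ T, v x * f y * ω x y := by
    rw [sum_comm]
    exact sum_congr rfl fun x _ => sum_congr rfl fun y _ => by rw [hsymm]; ring
  simp_rw [← tsum_mul_left]
  rw [sum_congr rfl fun x _ => tsum_eq_sum (s := T) fun y hy => by
        rw [hv y hy, zero_sub, neg_mul, hvω x y hy, neg_zero, mul_zero],
    sum_congr rfl fun x _ => tsum_eq_sum (s := T) fun y hy => by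
        rw [mul_left_comm, hvω x y hy, mul_zero]]
  simp only [mul_sub, sub_mul, sum_sub_distrib, ← mul_assoc]
  rw [hswap]
  simp only [mul_comm (f _) (v _)]

theorem abs_rpow_mul_neg_graphLaplacian_add_mul_le {μ V u v : G → ℝ} {x : G}
    (hω : ∀ y, 0 ≤ ω x y) (hx : {y | ω x y ≠ 0}.Finite) (hμ : 0 < μ x)
    (hu : graphLaplacian ω μ u x = V x * u x) (hv : 0 ≤ v x) {p : ℝ} (hp : 1 ≤ p) :
    |u x| ^ p * (-graphLaplacian ω μ v x + p * V x * v x) * μ x ≤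
      v x * ∑' y, (|u y| ^ p - |u x| ^ p) * ω x y - |u x| ^ p * ∑' y, (v y - v x) * ω x y := by
  have hkato := calc v x * μ x * (p * V x * |u x| ^ p)
      _ ≤ v x * μ x * graphLaplacian ω μ (fun y => |u y| ^ p) x :=
        mul_le_mul_of_nonneg_left (mul_mul_abs_rpow_le_graphLaplacian hω hx hμ hu hp)
          (mul_nonneg hv hμ.le)
      _ = v x * ∑' y, (|u y| ^ p - |u x| ^ p) * ω x y := by
        rw [graphLaplacian, mul_assoc (v x), mul_inv_cancel_left₀ hμ.ne']
  have hμx := hμ.ne'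
  calc _ = v x * μ x * (p * V x * |u x| ^ p) - |u x| ^ p * ∑' y, (v y - v x) * ω x y := by
        rw [graphLaplacian]; field_simp; ring
    _ ≤ _ := by linarith

end WeightedGraph

theorem stmt14_general {G : Type*}
    (ω : G → G → ℝ) (μ : G → ℝ)
    (hω_nonneg : ∀ x y, 0 ≤ ω x y)
    (hω_symm : ∀ x y, ω x y = ω y x)
    (hloc : ∀ x, {y | ω x y ≠ 0}.Finite)
    (hμ : ∀ x, 0 < μ x)
    (V : G → ℝ) (u : G → ℝ)
    (hu : ∀ x, (μ x)⁻¹ * (∑' y, (u y - u x) * ω x y) - V x * u x = 0)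
    (p : ℝ) (hp : 1 ≤ p)
    (v : G → ℝ) (hv_nonneg : ∀ x, 0 ≤ v x)
    (hv_supp : (Function.support v).Finite) :
    ∑' x, |u x| ^ p *
        (-((μ x)⁻¹ * ∑' y, (v y - v x) * ω x y) + p * V x * v x) * μ x ≤ 0 := by
  obtain ⟨T, hvT, hvωT⟩ := exists_finset_forall_notMem_mul_eq_zero hloc hv_supp
  have hvanish : ∀ x ∉ T, ∑' y, (v y - v x) * ω x y = 0 := fun x hx => by
    simp_rw [hvT x hx, sub_zero, hω_symm x, hvωT _ x hx, tsum_zero]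
  rw [tsum_eq_sum (s := T) fun x hx => by rw [hvanish x hx, hvT x hx]; simp]
  refine (sum_le_sum fun x _ => abs_rpow_mul_neg_graphLaplacian_add_mul_le (hω_nonneg x)
    (hloc x) (hμ x) (sub_eq_zero.1 (hu x)) (hv_nonneg x) hp).trans_eq ?_
  rw [sum_sub_distrib, sum_mul_tsum_sub_mul_comm hω_symm _ hvT hvωT, sub_self]

/-- Proposition 4.4: a priori estimate with a nonnegative finitely supported
test function `v`. -/
theorem stmt14 {G : Type*} [Countable G] [Infinite G]
    (ω : G → G → ℝ) (μ : G → ℝ)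
    (hω_nonneg : ∀ x y, 0 ≤ ω x y)
    (hω_symm : ∀ x y, ω x y = ω y x)
    (hω_diag : ∀ x, ω x x = 0)
    (hloc : ∀ x, {y | ω x y ≠ 0}.Finite)
    (hconn : ∀ x y : G, Relation.ReflTransGen (fun a b => 0 < ω a b) x y)
    (hμ : ∀ x, 0 < μ x)
    (V : G → ℝ) (u : G → ℝ)
    (hu_sum : ∀ x, Summable fun y => (u y - u x) * ω x y)
    (hu : ∀ x, (μ x)⁻¹ * (∑' y, (u y - u x) * ω x y) - V x * u x = 0)
    (p : ℝ) (hp : 1 ≤ p)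
    (v : G → ℝ) (hv_nonneg : ∀ x, 0 ≤ v x)
    (hv_supp : (Function.support v).Finite) :
    ∑' x, |u x| ^ p *
        (-((μ x)⁻¹ * ∑' y, (v y - v x) * ω x y) + p * V x * v x) * μ x ≤ 0 :=
  stmt14_general ω μ hω_nonneg hω_symm hloc hμ V u hu p hp v hv_nonneg hv_supp
end

section
/- Let (G, ω, μ) be an infinite, connected, locally finite weighted graph, V : G → ℝ, u a solution of Δu - Vu = 0, p ≥ 2, and let η, ξ : G → ℝ with η ≥ 0 finitely supported and (η²(y)-η²(x))(e^{ξ(y)}-e^{ξ(x)}) ≥ 0 for all x ~ y. Then (1/2) ∑_{x∈G} |u(x)|^p η²(x) e^{ξ(x)} ( pV(x)μ(x) - (1/2) ∑_{y∈G} ω(x,y)(1 - e^{ξ(y)-ξ(x)})² ) ≤ ∑_{x,y∈G} |u(x)|^p e^{ξ(y)} (η(y)-η(x))² ω(x,y). -/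
/-!
With `v = |u| ^ (p / 2)` and `w = η² e^ξ`, the convexity inequality
`p |a|^(p-2) a (b - a) ≤ 2 |a|^(p/2) (|b|^(p/2) - |a|^(p/2))` turns the equation, tested against
`|u|^(p-2) u w`, into `∑ p V μ |u|^p w ≤ ∑ₓ∑ᵧ 2 vₓ (v_y - vₓ) wₓ ω(x,y)`. Since `ω` is symmetric this
double sum equals `-½ ∑ₓ∑ᵧ (v_y - vₓ)(v_y w_y - vₓ wₓ) ω(x,y)`, which is bounded edge by edge by two
weighted Young inequalities. The first one needs the Chebyshev-type inequality
`(η_x + η_y)² (e^ξ_x + e^ξ_y) ≤ 4 (η_x² e^ξ_x + η_y² e^ξ_y)`, which is what the monotonicity of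
`η²` against `e^ξ` along edges provides. All sums are finite: they only involve the support of `η`
and its neighbours.
-/

open Finset Real

lemma rpow_tangent_le {q A B : ℝ} (hq : 1 ≤ q) (hA : 0 < A) (hB : 0 ≤ B) :
    q * A ^ (q - 1) * (B - A) ≤ B ^ q - A ^ q := by
  have hbern := one_add_mul_self_le_rpow_one_add (s := B / A - 1)
    (by linarith [div_nonneg hB hA.le]) hq
  rw [add_sub_cancel, div_rpow hB hA.le, le_div_iff₀ (rpow_pos_of_pos hA q)] at hbern
  calc q * A ^ (q - 1) * (B - A) = (1 + q * (B / A - 1)) * A ^ q - A ^ q := by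
        rw [rpow_sub_one hA.ne']; field_simp; ring
    _ ≤ B ^ q - A ^ q := by linarith

lemma mul_abs_rpow_mul_sub_le {p : ℝ} (hp : 2 ≤ p) (a b : ℝ) :
    p * (|a| ^ (p - 2) * a) * (b - a) ≤ 2 * |a| ^ (p / 2) * (|b| ^ (p / 2) - |a| ^ (p / 2)) := by
  rcases (abs_nonneg a).eq_or_lt with ha | hA
  · simp [abs_eq_zero.mp ha.symm, zero_rpow (by positivity : p / 2 ≠ 0)]
  have hmul : a * (b - a) ≤ |a| * (|b| - |a|) := by
    nlinarith [le_abs_self (a * b), abs_mul a b, abs_mul_abs_self a]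
  have hexp : |a| ^ (p - 2) * |a| = |a| ^ (p / 2) * |a| ^ (p / 2 - 1) := by
    rw [← rpow_add_one hA.ne', ← rpow_add hA]; ring_nf
  calc p * (|a| ^ (p - 2) * a) * (b - a) = p * |a| ^ (p - 2) * (a * (b - a)) := by ring
    _ ≤ p * |a| ^ (p - 2) * (|a| * (|b| - |a|)) := by gcongr
    _ = 2 * |a| ^ (p / 2) * (p / 2 * |a| ^ (p / 2 - 1) * (|b| - |a|)) := by
        linear_combination (p * (|b| - |a|)) * hexp
    _ ≤ 2 * |a| ^ (p / 2) * (|b| ^ (p / 2) - |a| ^ (p / 2)) := by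
        gcongr
        exact rpow_tangent_le (by linarith) hA (abs_nonneg b)

lemma neg_mul_le_of_sq_le_mul {X Y W M : ℝ} (hW : 0 ≤ W) (hM : 0 ≤ M) (h : Y ^ 2 ≤ W * M) :
    -(X * Y) ≤ (W * X ^ 2 + M) / 2 := by
  rcases hW.eq_or_lt with rfl | hW
  · have : Y = 0 := by nlinarith [sq_nonneg Y]
    subst this; linarith
  · nlinarith [sq_nonneg (W * X + Y)]

lemma caccioppoli_edge_estimate {c d α β E F : ℝ} (hE : 0 < E) (hF : 0 < F)
    (hmono : (β ^ 2 - α ^ 2) * (F - E) ≥ 0) :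
    2 * c * (d - c) * (α ^ 2 * E) + 2 * d * (c - d) * (β ^ 2 * F) ≤
      2 * c ^ 2 * F * (β - α) ^ 2 + c ^ 2 * α ^ 2 * E * (1 - F / E) ^ 2 / 2
        + (2 * d ^ 2 * E * (α - β) ^ 2 + d ^ 2 * β ^ 2 * F * (1 - E / F) ^ 2 / 2) := by
  set W := α ^ 2 * E + β ^ 2 * F
  have hW : 0 ≤ W := by positivity
  have h₁ : -((d - c) * ((β ^ 2 - α ^ 2) * (c * F + d * E))) ≤
      (W * (d - c) ^ 2 + 4 * (β - α) ^ 2 * (c ^ 2 * F + d ^ 2 * E)) / 2 := by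
    refine neg_mul_le_of_sq_le_mul hW (by positivity) ?_
    have hcs : (c * F + d * E) ^ 2 ≤ (E + F) * (c ^ 2 * F + d ^ 2 * E) := by
      nlinarith [mul_nonneg (mul_pos hE hF).le (sq_nonneg (c - d))]
    have hcheb : (α + β) ^ 2 * (E + F) ≤ 4 * W := by
      linear_combination 2 * hmono + mul_nonneg (add_pos hE hF).le (sq_nonneg (α - β))
    calc ((β ^ 2 - α ^ 2) * (c * F + d * E)) ^ 2
        = (β - α) ^ 2 * (α + β) ^ 2 * (c * F + d * E) ^ 2 := by ring
      _ ≤ (β - α) ^ 2 * (α + β) ^ 2 * ((E + F) * (c ^ 2 * F + d ^ 2 * E)) := by gcongr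
      _ = (β - α) ^ 2 * (c ^ 2 * F + d ^ 2 * E) * ((α + β) ^ 2 * (E + F)) := by ring
      _ ≤ (β - α) ^ 2 * (c ^ 2 * F + d ^ 2 * E) * (4 * W) := by gcongr
      _ = W * (4 * (β - α) ^ 2 * (c ^ 2 * F + d ^ 2 * E)) := by ring
  have h₂ : -((d - c) * ((F - E) * (c * α ^ 2 + d * β ^ 2))) ≤
      (W * (d - c) ^ 2 + (F - E) ^ 2 * (c ^ 2 * α ^ 2 / E + d ^ 2 * β ^ 2 / F)) / 2 := by
    refine neg_mul_le_of_sq_le_mul hW (by positivity) ?_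
    have htitu : (c * α ^ 2 + d * β ^ 2) ^ 2 ≤ W * (c ^ 2 * α ^ 2 / E + d ^ 2 * β ^ 2 / F) := by
      rw [div_add_div _ _ hE.ne' hF.ne', mul_div_assoc', le_div_iff₀ (mul_pos hE hF)]
      nlinarith [sq_nonneg (α * β * (c * F - d * E))]
    calc ((F - E) * (c * α ^ 2 + d * β ^ 2)) ^ 2
        = (F - E) ^ 2 * (c * α ^ 2 + d * β ^ 2) ^ 2 := by ring
      _ ≤ (F - E) ^ 2 * (W * (c ^ 2 * α ^ 2 / E + d ^ 2 * β ^ 2 / F)) := by gcongr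
      _ = W * ((F - E) ^ 2 * (c ^ 2 * α ^ 2 / E + d ^ 2 * β ^ 2 / F)) := by ring
  have hsplit : 2 * c * (d - c) * (α ^ 2 * E) + 2 * d * (c - d) * (β ^ 2 * F) =
      -(W * (d - c) ^ 2) - (d - c) * ((β ^ 2 - α ^ 2) * (c * F + d * E))
        - (d - c) * ((F - E) * (c * α ^ 2 + d * β ^ 2)) := by ring
  have hE' : c ^ 2 * α ^ 2 * E * (1 - F / E) ^ 2 = (F - E) ^ 2 * (c ^ 2 * α ^ 2 / E) := by
    field_simp; ring
  have hF' : d ^ 2 * β ^ 2 * F * (1 - E / F) ^ 2 = (F - E) ^ 2 * (d ^ 2 * β ^ 2 / F) := by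
    field_simp
  linarith

section Symmetrization

variable {ι R : Type*} [CommRing R] (D : Finset ι) (f g ω : ι → ι → R)

lemma sum_sum_add_swap_mul (hω : ∀ x y, ω x y = ω y x) :
    ∑ x ∈ D, ∑ y ∈ D, (f x y + f y x) * ω x y = 2 * ∑ x ∈ D, ∑ y ∈ D, f x y * ω x y := by
  have hswap : ∑ x ∈ D, ∑ y ∈ D, f y x * ω x y = ∑ x ∈ D, ∑ y ∈ D, f x y * ω x y := by
    rw [sum_comm]; simp only [hω]
  simp only [add_mul, sum_add_distrib, hswap]; ring

lemma sum_sum_mul_le_of_add_swap_le [LinearOrder R] [IsStrictOrderedRing R]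
    (hω_nonneg : ∀ x y, 0 ≤ ω x y) (hω : ∀ x y, ω x y = ω y x)
    (h : ∀ x ∈ D, ∀ y ∈ D, 0 < ω x y → f x y + f y x ≤ g x y + g y x) :
    ∑ x ∈ D, ∑ y ∈ D, f x y * ω x y ≤ ∑ x ∈ D, ∑ y ∈ D, g x y * ω x y := by
  have hpair : ∑ x ∈ D, ∑ y ∈ D, (f x y + f y x) * ω x y ≤
      ∑ x ∈ D, ∑ y ∈ D, (g x y + g y x) * ω x y := by
    refine sum_le_sum fun x hx => sum_le_sum fun y hy => ?_
    rcases (hω_nonneg x y).eq_or_lt with h0 | hpos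
    · simp [← h0]
    · exact mul_le_mul_of_nonneg_right (h x hx y hy hpos) hpos.le
  rw [sum_sum_add_swap_mul D f ω hω, sum_sum_add_swap_mul D g ω hω] at hpair
  exact le_of_mul_le_mul_left hpair two_pos

end Symmetrization

theorem caccioppoli_estimate_finset {G : Type*} (D : Finset G) (ω : G → G → ℝ)
    (hω_nonneg : ∀ x y, 0 ≤ ω x y) (hω_symm : ∀ x y, ω x y = ω y x)
    (μ V u : G → ℝ) {p : ℝ} (hp : 2 ≤ p) (η ξ : G → ℝ)
    (hmono : ∀ x y : G, 0 < ω x y →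
      ((η y)^2 - (η x)^2) * (Real.exp (ξ y) - Real.exp (ξ x)) ≥ 0)
    (hu : ∀ x ∈ D, η x ≠ 0 → ∑ y ∈ D, (u y - u x) * ω x y = μ x * (V x * u x)) :
    (1/2) * ∑ x ∈ D, |u x| ^ p * (η x)^2 * Real.exp (ξ x) *
        (p * V x * μ x - (1/2) * ∑ y ∈ D, ω x y * (1 - Real.exp (ξ y - ξ x))^2)
      ≤ ∑ x ∈ D, ∑ y ∈ D, |u x| ^ p * Real.exp (ξ y) * (η y - η x)^2 * ω x y := by
  let v : G → ℝ := fun x => |u x| ^ (p / 2)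
  have hv_sq : ∀ x, v x ^ 2 = |u x| ^ p := fun x => by
    rw [← rpow_mul_natCast (abs_nonneg _)]; norm_num
  have hkato : ∀ x ∈ D, p * V x * μ x * (|u x| ^ p * (η x ^ 2 * exp (ξ x))) ≤
      ∑ y ∈ D, 2 * v x * (v y - v x) * (η x ^ 2 * exp (ξ x)) * ω x y := by
    intro x hx
    by_cases hηx : η x = 0
    · simp [hηx]
    have hpow : |u x| ^ p = |u x| ^ (p - 2) * u x * u x := by
      rw [mul_assoc, ← sq, ← sq_abs, ← rpow_two, ← rpow_add_of_nonneg (abs_nonneg _) (by linarith)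
        (by norm_num)]
      ring_nf
    calc p * V x * μ x * (|u x| ^ p * (η x ^ 2 * exp (ξ x)))
        = p * (|u x| ^ (p - 2) * u x) * (η x ^ 2 * exp (ξ x)) * ∑ y ∈ D, (u y - u x) * ω x y := by
          rw [hu x hx hηx, hpow]; ring
      _ = ∑ y ∈ D, p * (|u x| ^ (p - 2) * u x) * (u y - u x) * (η x ^ 2 * exp (ξ x) * ω x y) := by
          rw [mul_sum]
          exact sum_congr rfl fun y _ => by ring
      _ ≤ ∑ y ∈ D, 2 * v x * (v y - v x) * (η x ^ 2 * exp (ξ x)) * ω x y := by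
          refine sum_le_sum fun y _ => ?_
          have hwω : 0 ≤ η x ^ 2 * exp (ξ x) * ω x y := by have := hω_nonneg x y; positivity
          nlinarith [mul_le_mul_of_nonneg_right (mul_abs_rpow_mul_sub_le hp (u x) (u y)) hwω]
  have hsymm := sum_sum_mul_le_of_add_swap_le D
    (fun x y => 2 * v x * (v y - v x) * (η x ^ 2 * exp (ξ x)))
    (fun x y => 2 * v x ^ 2 * exp (ξ y) * (η y - η x) ^ 2
      + v x ^ 2 * η x ^ 2 * exp (ξ x) * (1 - exp (ξ y - ξ x)) ^ 2 / 2) ω hω_nonneg hω_symm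
    (fun x _ y _ hxy => by
      simpa only [exp_sub] using caccioppoli_edge_estimate (exp_pos (ξ x)) (exp_pos (ξ y)) (hmono x y hxy))
  simp only [hv_sq] at hsymm
  have hL : ∑ x ∈ D, |u x| ^ p * (η x)^2 * Real.exp (ξ x) *
        (p * V x * μ x - (1/2) * ∑ y ∈ D, ω x y * (1 - Real.exp (ξ y - ξ x))^2)
      = ∑ x ∈ D, p * V x * μ x * (|u x| ^ p * (η x ^ 2 * exp (ξ x)))
        - ∑ x ∈ D, ∑ y ∈ D, |u x| ^ p * η x ^ 2 * exp (ξ x) * (1 - exp (ξ y - ξ x)) ^ 2 / 2 * ω x y := by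
    rw [← sum_sub_distrib]
    refine sum_congr rfl fun x _ => ?_
    rw [mul_sub, mul_sum, mul_sum]
    congr 1
    · ring
    · exact sum_congr rfl fun y _ => by ring
  have hR : ∑ x ∈ D, ∑ y ∈ D, (2 * |u x| ^ p * exp (ξ y) * (η y - η x) ^ 2
      + |u x| ^ p * η x ^ 2 * exp (ξ x) * (1 - exp (ξ y - ξ x)) ^ 2 / 2) * ω x y
      = 2 * ∑ x ∈ D, ∑ y ∈ D, |u x| ^ p * Real.exp (ξ y) * (η y - η x)^2 * ω x y
        + ∑ x ∈ D, ∑ y ∈ D, |u x| ^ p * η x ^ 2 * exp (ξ x) * (1 - exp (ξ y - ξ x)) ^ 2 / 2 * ω x y := by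
    simp only [add_mul, sum_add_distrib, mul_sum]
    congr 1
    exact sum_congr rfl fun x _ => sum_congr rfl fun y _ => by ring
  linarith [sum_le_sum hkato]

lemma exists_finset_forall_adj_mem {G : Type*} (ω : G → G → ℝ)
    (hloc : ∀ x, {y | ω x y ≠ 0}.Finite) {S : Set G} (hS : S.Finite) :
    ∃ D : Finset G, ∀ x ∈ S, x ∈ D ∧ ∀ y, ω x y ≠ 0 → y ∈ D := by
  refine ⟨(hS.union (hS.biUnion fun x _ => hloc x)).toFinset, fun x hx => ⟨?_, fun y hy => ?_⟩⟩
  · simp [hx]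
  · simp only [Set.Finite.mem_toFinset, Set.mem_union, Set.mem_iUnion]
    exact Or.inr ⟨x, hx, hy⟩

lemma tsum_tsum_eq_sum_sum {G M : Type*} [AddCommMonoid M] [TopologicalSpace M]
    {D : Finset G} {f : G → G → M} (hf : ∀ x y, f x y ≠ 0 → x ∈ D ∧ y ∈ D) :
    ∑' x, ∑' y, f x y = ∑ x ∈ D, ∑ y ∈ D, f x y := by
  rw [tsum_eq_sum (s := D) fun x hx => ?_]
  · exact sum_congr rfl fun x _ => tsum_eq_sum fun y hy => not_not.mp fun h => hy (hf x y h).2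
  · have hzero : ∀ y, f x y = 0 := fun y => not_not.mp fun h => hx (hf x y h).1
    simp [hzero]

section Neighbourhood

variable {G : Type*} {ω : G → G → ℝ} {η : G → ℝ} {D : Finset G}

lemma tsum_eq_sum_of_adj (hD : ∀ x ∈ Function.support η, x ∈ D ∧ ∀ y, ω x y ≠ 0 → y ∈ D)
    {x : G} (hx : η x ≠ 0) {f : G → ℝ} (hf : ∀ y, ω x y = 0 → f y = 0) :
    ∑' y, f y = ∑ y ∈ D, f y :=
  tsum_eq_sum fun y hy => hf y (not_not.mp fun h => hy ((hD x hx).2 y h))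

lemma mem_of_adj (hD : ∀ x ∈ Function.support η, x ∈ D ∧ ∀ y, ω x y ≠ 0 → y ∈ D)
    (hω_symm : ∀ x y, ω x y = ω y x) {x y : G} (hxy : ω x y ≠ 0) (hη : η x ≠ 0 ∨ η y ≠ 0) :
    x ∈ D ∧ y ∈ D := by
  rcases hη with h | h
  · exact ⟨(hD x h).1, (hD x h).2 y hxy⟩
  · exact ⟨(hD y h).2 x (hω_symm x y ▸ hxy), (hD y h).1⟩

end Neighbourhood

theorem stmt15_general {G : Type*}
    (ω : G → G → ℝ) (μ : G → ℝ)
    (hω_nonneg : ∀ x y, 0 ≤ ω x y)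
    (hω_symm : ∀ x y, ω x y = ω y x)
    (hloc : ∀ x, {y | ω x y ≠ 0}.Finite)
    (hμ : ∀ x, 0 < μ x)
    (V : G → ℝ) (u : G → ℝ)
    (hu : ∀ x, (μ x)⁻¹ * (∑' y, (u y - u x) * ω x y) - V x * u x = 0)
    (p : ℝ) (hp : 2 ≤ p)
    (η ξ : G → ℝ)
    (hη_supp : (Function.support η).Finite)
    (hmono : ∀ x y : G, 0 < ω x y →
      ((η y)^2 - (η x)^2) * (Real.exp (ξ y) - Real.exp (ξ x)) ≥ 0) :
    (1/2) * ∑' x, |u x| ^ p * (η x)^2 * Real.exp (ξ x) *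
        (p * V x * μ x - (1/2) * ∑' y, ω x y * (1 - Real.exp (ξ y - ξ x))^2)
      ≤ ∑' x, ∑' y, |u x| ^ p * Real.exp (ξ y) * (η y - η x)^2 * ω x y := by
  obtain ⟨D, hD⟩ := exists_finset_forall_adj_mem ω hloc hη_supp
  have hu_fin : ∀ x ∈ D, η x ≠ 0 → ∑ y ∈ D, (u y - u x) * ω x y = μ x * (V x * u x) := by
    intro x _ hx
    rw [← tsum_eq_sum_of_adj hD hx fun y hy => by simp [hy], ← inv_mul_eq_iff_eq_mul₀ (hμ x).ne',
      ← sub_eq_zero]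
    exact hu x
  have hL : ∑' x, |u x| ^ p * (η x)^2 * Real.exp (ξ x) *
        (p * V x * μ x - (1/2) * ∑' y, ω x y * (1 - Real.exp (ξ y - ξ x))^2)
      = ∑ x ∈ D, |u x| ^ p * (η x)^2 * Real.exp (ξ x) *
        (p * V x * μ x - (1/2) * ∑ y ∈ D, ω x y * (1 - Real.exp (ξ y - ξ x))^2) := by
    rw [tsum_eq_sum (s := D) fun x hx => by
      simp [show η x = 0 from not_not.mp fun h => hx (hD x h).1]]
    refine sum_congr rfl fun x _ => ?_
    by_cases hx : η x = 0
    · simp [hx]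
    · rw [tsum_eq_sum_of_adj hD hx fun y hy => by simp [hy]]
  rw [hL, tsum_tsum_eq_sum_sum fun x y h => mem_of_adj hD hω_symm (right_ne_zero_of_mul h)
    (by contrapose! h; simp [h.1, h.2])]
  exact caccioppoli_estimate_finset D ω hω_nonneg hω_symm μ V u hp η ξ hmono hu_fin

/-- Proposition 4.3: key a priori estimate for `p ≥ 2`. -/
theorem stmt15 {G : Type*} [Countable G] [Infinite G]
    (ω : G → G → ℝ) (μ : G → ℝ)
    (hω_nonneg : ∀ x y, 0 ≤ ω x y)
    (hω_symm : ∀ x y, ω x y = ω y x)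
    (hω_diag : ∀ x, ω x x = 0)
    (hloc : ∀ x, {y | ω x y ≠ 0}.Finite)
    (hconn : ∀ x y : G, Relation.ReflTransGen (fun a b => 0 < ω a b) x y)
    (hμ : ∀ x, 0 < μ x)
    (V : G → ℝ) (u : G → ℝ)
    (hu_sum : ∀ x, Summable fun y => (u y - u x) * ω x y)
    (hu : ∀ x, (μ x)⁻¹ * (∑' y, (u y - u x) * ω x y) - V x * u x = 0)
    (p : ℝ) (hp : 2 ≤ p)
    (η ξ : G → ℝ)
    (hη_nonneg : ∀ x, 0 ≤ η x)
    (hη_supp : (Function.support η).Finite)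
    (hmono : ∀ x y : G, 0 < ω x y →
      ((η y)^2 - (η x)^2) * (Real.exp (ξ y) - Real.exp (ξ x)) ≥ 0)
    (hξsum : ∀ x, Summable fun y => ω x y * (1 - Real.exp (ξ y - ξ x))^2)
    (hexpsum : ∀ x, Summable fun y => ω x y * Real.exp (ξ y)) :
    (1/2) * ∑' x, |u x| ^ p * (η x)^2 * Real.exp (ξ x) *
        (p * V x * μ x - (1/2) * ∑' y, ω x y * (1 - Real.exp (ξ y - ξ x))^2)
      ≤ ∑' x, ∑' y, |u x| ^ p * Real.exp (ξ y) * (η y - η x)^2 * ω x y :=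
  stmt15_general ω μ hω_nonneg hω_symm hloc hμ V u hu p hp η ξ hη_supp hmono
end
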